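/- arXiv:2310.08855 — 7 statements merged into one kernel-verified Lean document; each statement's English description precedes it below -/
import Mathlib

section
/- (Theorem 1, statistical weight for EMA.) Suppose the batch statistics are S_i = r_i · S^{g(i)} + ((1 − r_i)/(T − 1)) · Σ_{t' < g(i)} S^{t'} for all 1 ≤ i ≤ m_T, where S^1, …, S^T ∈ V are fixed per-task statistics. If the EMA is started from E₀ = 0, then E_{m_T} = Σ_{t=1}^{T} c_t · S^t, where c_t = Σ_{i=m_{t−1}+1}^{m_t} η_i r_i ∏_{j=i+1}^{m_T} (1 − η_j) + Σ_{i=m_t+1}^{m_T} (η_i (1 − r_i)/(T − 1)) ∏_{j=i+1}^{m_T} (1 − η_j). -/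
open Finset


/-- **Theorem 1 (statistical weight for EMA).**
Continual learning over `T ≥ 2` tasks with batch boundaries `0 = m 0 < m 1 < ⋯ < m T`;
batch `i ∈ {1,…,m T}` belongs to task `g i`, the unique `t` with `m (t-1) < i ≤ m t`.
If the batch statistics satisfy
`S i = r i • Stask (g i) + ((1 - r i)/(T - 1)) • ∑_{t' < g i} Stask t'`
and the EMA is started from `E 0 = 0`, then
`E (m T) = ∑_{t=1}^{T} c t • Stask t` with
`c t = ∑_{i=m(t-1)+1}^{m t} η i * r i * ∏_{j=i+1}^{m T}(1-η j)
      + ∑_{i=m t+1}^{m T} (η i * (1 - r i)/(T-1)) * ∏_{j=i+1}^{m T}(1-η j)`. -/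
theorem ema_statistical_weight {V : Type*} [AddCommGroup V] [Module ℝ V]
    (T : ℕ) (hT : 2 ≤ T)
    (m : ℕ → ℕ) (hm0 : m 0 = 0) (hmono : ∀ t, t < T → m t < m (t + 1))
    (g : ℕ → ℕ)
    (hg : ∀ i, 1 ≤ i → i ≤ m T → 1 ≤ g i ∧ g i ≤ T ∧ m (g i - 1) < i ∧ i ≤ m (g i))
    (η : ℕ → ℝ) (r : ℕ → ℝ) (Stask : ℕ → V) (S : ℕ → V)
    (hS : ∀ i, 1 ≤ i → i ≤ m T →
      S i = (r i) • Stask (g i) +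
        ((1 - r i) / ((T : ℝ) - 1)) • ∑ t' ∈ Finset.Ico 1 (g i), Stask t')
    (E : ℕ → V) (hE0 : E 0 = 0)
    (hE : ∀ k : ℕ, 1 ≤ k → E k = (1 - η k) • E (k - 1) + (η k) • S k) :
    E (m T) = ∑ t ∈ Finset.Icc 1 T,
      ((∑ i ∈ Finset.Icc (m (t - 1) + 1) (m t),
          η i * r i * ∏ j ∈ Finset.Icc (i + 1) (m T), (1 - η j)) +
        ∑ i ∈ Finset.Icc (m t + 1) (m T),
          (η i * (1 - r i) / ((T : ℝ) - 1)) * ∏ j ∈ Finset.Icc (i + 1) (m T), (1 - η j)) •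
        Stask t := by
  -- monotonicity of m on [0, T]
  have hmle : ∀ s t, s ≤ t → t ≤ T → m s ≤ m t := by
    intro s t hst htT
    induction t with
    | zero =>
      have : s = 0 := by omega
      simp [this]
    | succ n ih =>
      rcases Nat.lt_or_ge s (n + 1) with h | h
      · have h1 := hmono n (by omega)
        have h2 := ih (by omega) (by omega)
        omega
      · have : s = n + 1 := by omega
        simp [this]
  have hmlt : ∀ s t, s < t → t ≤ T → m s < m t := by
    intro s t hst htT
    have h1 := hmle s (t - 1) (by omega) (by omega)
    have h2 := hmono (t - 1) (by omega)
    have h3 : t - 1 + 1 = t := by omega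
    rw [h3] at h2
    omega
  -- closed form of the EMA
  have hEform : ∀ n, E n = ∑ i ∈ Icc 1 n,
      (η i * ∏ j ∈ Icc (i + 1) n, (1 - η j)) • S i := by
    intro n
    induction n with
    | zero => simp [hE0]
    | succ n ih =>
      rw [hE (n + 1) (by omega)]
      simp only [Nat.add_sub_cancel]
      rw [ih, Finset.sum_Icc_succ_top (by omega : 1 ≤ n + 1), Finset.smul_sum]
      congr 1
      · apply Finset.sum_congr rfl
        intro i hi
        have hi' : i + 1 ≤ n + 1 := by
          simp only [Finset.mem_Icc] at hi; omega
        rw [Finset.prod_Icc_succ_top hi', smul_smul]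
        congr 1
        ring
      · have he : Icc (n + 1 + 1) (n + 1) = (∅ : Finset ℕ) := by
          rw [Finset.Icc_eq_empty]; omega
        rw [he]
        simp
  -- membership in a block determines g
  have hgi : ∀ i t, i ∈ Icc 1 (m T) → t ∈ Icc 1 T →
      (i ∈ Icc (m (t - 1) + 1) (m t) ↔ g i = t) := by
    intro i t hi ht
    simp only [Finset.mem_Icc] at hi ht
    obtain ⟨hg1, hg2, hg3, hg4⟩ := hg i hi.1 hi.2
    simp only [Finset.mem_Icc]
    constructor
    · rintro ⟨h1, h2⟩
      by_contra hne
      rcases Nat.lt_or_ge (g i) t with h | h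
      · have := hmle (g i) (t - 1) (by omega) (by omega)
        omega
      · have hlt : t < g i := by omega
        have := hmle t (g i - 1) (by omega) (by omega)
        omega
    · rintro rfl
      exact ⟨by omega, hg4⟩
  -- partition of Icc 1 (m T) into blocks
  have hpart : Icc 1 (m T) = (Icc 1 T).biUnion (fun t => Icc (m (t - 1) + 1) (m t)) := by
    ext i
    simp only [Finset.mem_biUnion, Finset.mem_Icc]
    constructor
    · intro hi
      obtain ⟨hg1, hg2, hg3, hg4⟩ := hg i hi.1 hi.2
      exact ⟨g i, ⟨hg1, hg2⟩, by omega, hg4⟩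
    · rintro ⟨t, ⟨ht1, ht2⟩, h1, h2⟩
      have h3 := hmle t T ht2 le_rfl
      constructor
      · omega
      · omega
  have hdisj : (↑(Icc 1 T) : Set ℕ).PairwiseDisjoint
      (fun t => Icc (m (t - 1) + 1) (m t)) := by
    intro a ha b hb hab
    simp only [Finset.coe_Icc, Set.mem_Icc] at ha hb
    apply Finset.disjoint_left.mpr
    intro i hia hib
    simp only [Finset.mem_Icc] at hia hib
    rcases Nat.lt_or_ge a b with h | h
    · have := hmle a (b - 1) (by omega) (by omega)
      omega
    · have hba : b < a := by omega
      have := hmle b (a - 1) (by omega) (by omega)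
      omega
  -- rewrite the LHS
  rw [hEform (m T)]
  have step1 : ∑ i ∈ Icc 1 (m T), (η i * ∏ j ∈ Icc (i + 1) (m T), (1 - η j)) • S i
      = (∑ i ∈ Icc 1 (m T),
          ((η i * ∏ j ∈ Icc (i + 1) (m T), (1 - η j)) * r i) • Stask (g i))
        + ∑ i ∈ Icc 1 (m T), ∑ t' ∈ Ico 1 (g i),
          ((η i * ∏ j ∈ Icc (i + 1) (m T), (1 - η j)) * ((1 - r i) / ((T : ℝ) - 1)))
            • Stask t' := by
    rw [← Finset.sum_add_distrib]
    apply Finset.sum_congr rfl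
    intro i hi
    simp only [Finset.mem_Icc] at hi
    rw [hS i hi.1 hi.2, smul_add, smul_smul, smul_smul, Finset.smul_sum]
  rw [step1]
  -- RHS split
  have hrhs : ∑ t ∈ Finset.Icc 1 T,
      ((∑ i ∈ Finset.Icc (m (t - 1) + 1) (m t),
          η i * r i * ∏ j ∈ Finset.Icc (i + 1) (m T), (1 - η j)) +
        ∑ i ∈ Finset.Icc (m t + 1) (m T),
          (η i * (1 - r i) / ((T : ℝ) - 1)) * ∏ j ∈ Finset.Icc (i + 1) (m T), (1 - η j)) •
        Stask t
      = (∑ t ∈ Icc 1 T, (∑ i ∈ Icc (m (t - 1) + 1) (m t),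
          η i * r i * ∏ j ∈ Icc (i + 1) (m T), (1 - η j)) • Stask t)
        + ∑ t ∈ Icc 1 T, (∑ i ∈ Icc (m t + 1) (m T),
          (η i * (1 - r i) / ((T : ℝ) - 1)) * ∏ j ∈ Icc (i + 1) (m T), (1 - η j)) • Stask t := by
    rw [← Finset.sum_add_distrib]
    apply Finset.sum_congr rfl
    intro t _
    rw [add_smul]
  rw [hrhs]
  congr 1
  -- first part: group by blocks
  · rw [hpart, Finset.sum_biUnion hdisj]
    apply Finset.sum_congr rfl
    intro t ht
    rw [Finset.sum_smul]
    apply Finset.sum_congr rfl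
    intro i hi
    have hiI : i ∈ Icc 1 (m T) := by
      rw [hpart]
      exact Finset.mem_biUnion.mpr ⟨t, ht, hi⟩
    have hgit : g i = t := (hgi i t hiI ht).mp hi
    rw [hgit]
    congr 1
    ring
  -- second part: swap order of summation
  · rw [Finset.sum_comm' (t := fun i => Ico 1 (g i)) (t' := Icc 1 T)
      (s' := fun t' => Icc (m t' + 1) (m T))]
    · apply Finset.sum_congr rfl
      intro t' _
      rw [Finset.sum_smul]
      apply Finset.sum_congr rfl
      intro i _
      congr 1
      ring
    · intro i t'
      simp only [Finset.mem_Icc, Finset.mem_Ico]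
      constructor
      · rintro ⟨⟨hi1, hi2⟩, ht1, ht2⟩
        obtain ⟨hg1, hg2, hg3, hg4⟩ := hg i hi1 hi2
        have h1 := hmle t' (g i - 1) (by omega) (by omega)
        exact ⟨⟨by omega, hi2⟩, ht1, by omega⟩
      · rintro ⟨⟨hi1, hi2⟩, ht1, ht2⟩
        have hm1 : 0 < m t' := by
          have := hmlt 0 t' (by omega) ht2
          omega
        have hi1' : 1 ≤ i := by omega
        obtain ⟨hg1, hg2, hg3, hg4⟩ := hg i hi1' hi2
        have : t' < g i := by
          by_contra h
          have := hmle (g i) t' (by omega) ht2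
          omega
        exact ⟨⟨by omega, hi2⟩, ht1, this⟩
end

section
/- (Recency bias of EMA.) Assume constant momentum η_i ≡ 1 − η̄ with η̄ ∈ (0,1), no replay r_i ≡ 1, and equal task lengths m_t = t·m_1 for a fixed integer m_1 ≥ 1. Then c_t = η̄^{(T−t)·m_1} · (1 − η̄^{m_1}) for every t, and the statistical weights are strictly increasing in the task index: c_t < c_{t+1} for all 1 ≤ t ≤ T − 1. -/
lemma ema_aux (x : ℝ) (N a : ℕ) : ∀ n : ℕ, a + n ≤ N →
    ∑ i ∈ Finset.Icc (a + 1) (a + n), x ^ (N - i) =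
      x ^ (N - (a + n)) * ∑ k ∈ Finset.range n, x ^ k := by
  intro n
  induction n with
  | zero => simp
  | succ n ih =>
    intro h
    rw [show a + (n + 1) = (a + n) + 1 from rfl,
      Finset.sum_Icc_succ_top (by omega), ih (by omega), geom_sum_succ]
    have h1 : N - (a + n) = (N - (a + n + 1)) + 1 := by omega
    rw [h1, pow_succ]
    ring

/-- **Recency bias of EMA.**
Continual learning over `T ≥ 2` tasks with batch boundaries `0 = m 0 < m 1 < ⋯ < m T`,
statistical weight `c t` defined as usual. Assume constant momentum `η i ≡ 1 - η'`
with `η' ∈ (0,1)`, no replay `r i ≡ 1`, and equal task lengths `m t = t * m₁` with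
`m₁ ≥ 1`. Then `c t = η'^((T-t)*m₁) * (1 - η'^m₁)` for every task `t ∈ {1,…,T}`, and
the statistical weights are strictly increasing in the task index:
`c t < c (t+1)` for all `1 ≤ t ≤ T - 1`. -/
theorem recency_bias_of_ema
    (T : ℕ) (hT : 2 ≤ T)
    (m₁ : ℕ) (hm₁ : 1 ≤ m₁)
    (m : ℕ → ℕ) (hm : ∀ t, t ≤ T → m t = t * m₁)
    (η' : ℝ) (hη0 : 0 < η') (hη1 : η' < 1)
    (η : ℕ → ℝ) (hη : ∀ i, η i = 1 - η')
    (r : ℕ → ℝ) (hr : ∀ i, r i = 1)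
    (c : ℕ → ℝ)
    (hc : ∀ t, c t =
      (∑ i ∈ Finset.Icc (m (t - 1) + 1) (m t),
          η i * r i * ∏ j ∈ Finset.Icc (i + 1) (m T), (1 - η j)) +
        ∑ i ∈ Finset.Icc (m t + 1) (m T),
          (η i * (1 - r i) / ((T : ℝ) - 1)) * ∏ j ∈ Finset.Icc (i + 1) (m T), (1 - η j)) :
    (∀ t, 1 ≤ t → t ≤ T → c t = η' ^ ((T - t) * m₁) * (1 - η' ^ m₁)) ∧
    (∀ t, 1 ≤ t → t ≤ T - 1 → c t < c (t + 1)) := by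
  have key : ∀ t, 1 ≤ t → t ≤ T → c t = η' ^ ((T - t) * m₁) * (1 - η' ^ m₁) := by
    intro t h1 h2
    have hmT : m T = T * m₁ := hm T le_rfl
    have hmt : m t = t * m₁ := hm t h2
    have hmt1 : m (t - 1) = (t - 1) * m₁ := hm (t - 1) (by omega)
    rw [hc t]
    have hz : ∑ i ∈ Finset.Icc (m t + 1) (m T),
        (η i * (1 - r i) / ((T : ℝ) - 1)) * ∏ j ∈ Finset.Icc (i + 1) (m T), (1 - η j) = 0 := by
      apply Finset.sum_eq_zero
      intro i _
      rw [hr i]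
      ring
    rw [hz, add_zero]
    have hterm : ∀ i ∈ Finset.Icc (m (t - 1) + 1) (m t),
        η i * r i * ∏ j ∈ Finset.Icc (i + 1) (m T), (1 - η j)
          = (1 - η') * η' ^ (m T - i) := by
      intro i hi
      rw [Finset.mem_Icc] at hi
      have hiT : i ≤ m T := by
        rw [hmT]; rw [hmt] at hi
        calc i ≤ t * m₁ := hi.2
          _ ≤ T * m₁ := Nat.mul_le_mul_right _ h2
      have hcard : m T + 1 - (i + 1) = m T - i := by omega
      rw [hη i, hr i]
      have : ∏ j ∈ Finset.Icc (i + 1) (m T), (1 - η j) = η' ^ (m T - i) := by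
        rw [Finset.prod_congr rfl (fun j _ => show (1 - η j) = η' by rw [hη j]; ring),
          Finset.prod_const, Nat.card_Icc, hcard]
      rw [this]; ring
    have hsplit : t * m₁ = (t - 1) * m₁ + m₁ := by
      conv_lhs => rw [show t = (t - 1) + 1 by omega]
      rw [Nat.succ_mul]
    rw [Finset.sum_congr rfl hterm, ← Finset.mul_sum, hmt1, hmt, hsplit]
    have hle : (t - 1) * m₁ + m₁ ≤ m T := by
      rw [hmT, ← hsplit]
      exact Nat.mul_le_mul_right _ h2
    rw [ema_aux η' (m T) ((t - 1) * m₁) m₁ hle]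
    have hgeom := geom_sum_mul η' m₁
    have hexp : m T - ((t - 1) * m₁ + m₁) = (T - t) * m₁ := by
      rw [hmT, ← hsplit, Nat.sub_mul]
    rw [hexp]
    linear_combination (-η' ^ ((T - t) * m₁)) * hgeom
  refine ⟨key, fun t h1 h2 => ?_⟩
  rw [key t h1 (by omega), key (t + 1) (by omega) (by omega)]
  have hpos : 0 < 1 - η' ^ m₁ := by
    have := pow_lt_one₀ hη0.le hη1 (show m₁ ≠ 0 by omega)
    linarith
  apply mul_lt_mul_of_pos_right _ hpos
  apply pow_lt_pow_right_of_lt_one₀ hη0 hη1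
  have h3 : T - (t + 1) < T - t := by omega
  exact (Nat.mul_lt_mul_right (show 0 < m₁ by omega)).mpr h3
end

section
/- (Corollary 2, necessity.) Assume constant momentum η_i ≡ 1 − η̄ with η̄ ∈ (0,1), constant replay proportion r_i ≡ r with r ∈ (0,1], T ≥ 2 tasks, and equal task lengths m_t = t·m_1 for a fixed integer m_1 ≥ 1. If c_t = c_{t+1} for some t with 1 ≤ t ≤ T − 1, then r = 1/(T − η̄^{m_1}·(T − 1)). -/
lemma sum_tail_geom (η' : ℝ) (hη : η' ≠ 1) (a M : ℕ) (h : a ≤ M) :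
    (1 - η') * ∑ i ∈ Finset.Ioc a M, η' ^ (M - i) = 1 - η' ^ (M - a) := by
  have hIoc : Finset.Ioc a M = Finset.Ico (a + 1) (M + 1) := by
    rw [Finset.Ico_add_one_right_eq_Icc, Finset.Icc_add_one_left_eq_Ioc]
  have key : ∑ i ∈ Finset.Ioc a M, η' ^ (M - i)
      = ∑ k ∈ Finset.range (M - a), η' ^ k := by
    rw [hIoc, Finset.sum_Ico_eq_sum_range]
    have hn : M + 1 - (a + 1) = M - a := by omega
    rw [hn]
    rw [← Finset.sum_range_reflect fun k => η' ^ k]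
    refine Finset.sum_congr rfl fun k hk => ?_
    have hk' := Finset.mem_range.mp hk
    congr 1
    omega
  have h1 : η' - 1 ≠ 0 := sub_ne_zero.mpr hη
  rw [key, geom_sum_eq hη]
  field_simp
  ring

/-- **Corollary 2 (necessity).**
Continual learning over `T ≥ 2` tasks, statistical weight `c t` defined as usual.
Assume constant momentum `η i ≡ 1 - η'` with `η' ∈ (0,1)`, constant replay proportion
`r i ≡ r` with `r ∈ (0,1]`, and equal task lengths `m t = t * m₁` with `m₁ ≥ 1`.
If `c t = c (t+1)` for some `1 ≤ t ≤ T - 1`, then `r = 1 / (T - η'^m₁ * (T - 1))`. -/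
theorem corollary2_necessity
    (T : ℕ) (hT : 2 ≤ T)
    (m₁ : ℕ) (hm₁ : 1 ≤ m₁)
    (m : ℕ → ℕ) (hm : ∀ t, t ≤ T → m t = t * m₁)
    (η' : ℝ) (hη0 : 0 < η') (hη1 : η' < 1)
    (η : ℕ → ℝ) (hη : ∀ i, η i = 1 - η')
    (rconst : ℝ) (hr0 : 0 < rconst) (hr1 : rconst ≤ 1)
    (r : ℕ → ℝ) (hr : ∀ i, r i = rconst)
    (c : ℕ → ℝ)
    (hc : ∀ t, c t =
      (∑ i ∈ Finset.Icc (m (t - 1) + 1) (m t),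
          η i * r i * ∏ j ∈ Finset.Icc (i + 1) (m T), (1 - η j)) +
        ∑ i ∈ Finset.Icc (m t + 1) (m T),
          (η i * (1 - r i) / ((T : ℝ) - 1)) * ∏ j ∈ Finset.Icc (i + 1) (m T), (1 - η j))
    (t : ℕ) (ht1 : 1 ≤ t) (htT : t ≤ T - 1)
    (heq : c t = c (t + 1)) :
    rconst = 1 / ((T : ℝ) - η' ^ m₁ * ((T : ℝ) - 1)) := by
  set M := T * m₁ with hM
  have hmT : m T = M := hm T le_rfl
  simp only [hmT] at hc
  set u : ℝ := η' ^ m₁ with hu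
  have hu0 : 0 < u := pow_pos hη0 _
  have hu1 : u < 1 := pow_lt_one₀ hη0.le hη1 (by omega)
  have hηne : η' ≠ 1 := ne_of_lt hη1
  -- closed form of tail sums
  have tail : ∀ s, s ≤ T →
      (1 - η') * ∑ i ∈ Finset.Ioc (s * m₁) M, η' ^ (M - i) = 1 - u ^ (T - s) := by
    intro s hs
    rw [sum_tail_geom η' hηne _ _ (Nat.mul_le_mul_right _ hs)]
    have he : M - s * m₁ = (T - s) * m₁ := by
      rw [hM, ← Nat.sub_mul]
    rw [he, mul_comm (T - s) m₁, pow_mul]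
  -- generic product simplification
  have hprod : ∀ i : ℕ, (∏ j ∈ Finset.Icc (i + 1) M, (1 - η j)) = η' ^ (M - i) := by
    intro i
    rw [Finset.prod_congr rfl (fun j _ => by rw [hη j, sub_sub_cancel]),
      Finset.prod_const, Nat.card_Icc]
    congr 1
    omega
  -- closed form of c
  have hcc : ∀ t', 1 ≤ t' → t' ≤ T →
      c t' = rconst * (u ^ (T - t') - u ^ (T - (t' - 1)))
        + (1 - rconst) / ((T : ℝ) - 1) * (1 - u ^ (T - t')) := by
    intro t' h1 h2
    have hmt' : m t' = t' * m₁ := hm t' h2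
    have hmt1 : m (t' - 1) = (t' - 1) * m₁ := hm _ (by omega)
    have s1 : (∑ i ∈ Finset.Icc (m (t' - 1) + 1) (m t'),
          η i * r i * ∏ j ∈ Finset.Icc (i + 1) M, (1 - η j))
        = (1 - η') * rconst
            * ∑ i ∈ Finset.Ioc ((t' - 1) * m₁) (t' * m₁), η' ^ (M - i) := by
      rw [hmt', hmt1, Finset.Icc_add_one_left_eq_Ioc, Finset.mul_sum]
      exact Finset.sum_congr rfl fun i _ => by rw [hη i, hr i, hprod i]
    have s2 : (∑ i ∈ Finset.Icc (m t' + 1) M,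
          (η i * (1 - r i) / ((T : ℝ) - 1)) * ∏ j ∈ Finset.Icc (i + 1) M, (1 - η j))
        = (1 - η') * ((1 - rconst) / ((T : ℝ) - 1))
            * ∑ i ∈ Finset.Ioc (t' * m₁) M, η' ^ (M - i) := by
      rw [hmt', Finset.Icc_add_one_left_eq_Ioc, Finset.mul_sum]
      refine Finset.sum_congr rfl fun i _ => ?_
      rw [hη i, hr i, hprod i]
      ring
    rw [hc t', s1, s2]
    set S1 := ∑ i ∈ Finset.Ioc ((t' - 1) * m₁) (t' * m₁), η' ^ (M - i) with hS1d
    set S2 := ∑ i ∈ Finset.Ioc (t' * m₁) M, η' ^ (M - i) with hS2d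
    have hsplit : S1 + S2 = ∑ i ∈ Finset.Ioc ((t' - 1) * m₁) M, η' ^ (M - i) :=
      Finset.sum_Ioc_consecutive _
        (Nat.mul_le_mul_right _ (by omega)) (Nat.mul_le_mul_right _ h2)
    have A := tail (t' - 1) (by omega)
    have B := tail t' h2
    rw [← hsplit, mul_add] at A
    have hB : (1 - η') * S2 = 1 - u ^ (T - t') := B
    have hA : (1 - η') * S1 = u ^ (T - t') - u ^ (T - (t' - 1)) := by linarith
    calc (1 - η') * rconst * S1 + (1 - η') * ((1 - rconst) / ((T : ℝ) - 1)) * S2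
        = rconst * ((1 - η') * S1)
          + (1 - rconst) / ((T : ℝ) - 1) * ((1 - η') * S2) := by ring
      _ = _ := by rw [hA, hB]
  -- index arithmetic
  have e1 : T - t = T - (t + 1) + 1 := by omega
  have e2 : T - (t - 1) = T - (t + 1) + 2 := by omega
  have e4 : T - (t + 1 - 1) = T - (t + 1) + 1 := by omega
  set s := T - (t + 1) with hs
  rw [hcc t ht1 (by omega), hcc (t + 1) (by omega) (by omega), e1, e2, e4] at heq
  -- derive (1-r)/(T-1) = r (1-u)
  have hT2 : (2 : ℝ) ≤ (T : ℝ) := by exact_mod_cast hT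
  have hT1ne : (T : ℝ) - 1 ≠ 0 := by linarith
  have key : u ^ s * (1 - u)
      * ((1 - rconst) / ((T : ℝ) - 1) - rconst * (1 - u)) = 0 := by
    have p1 : u ^ (s + 1) = u ^ s * u := pow_succ u s
    have p2 : u ^ (s + 2) = u ^ s * u * u := by
      rw [pow_succ, pow_succ]
    rw [p1, p2] at heq
    linear_combination heq
  have hpos : 0 < u ^ s * (1 - u) := mul_pos (pow_pos hu0 _) (by linarith)
  have hq : (1 - rconst) / ((T : ℝ) - 1) = rconst * (1 - u) := by
    rcases mul_eq_zero.mp key with h | h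
    · exact absurd h (ne_of_gt hpos)
    · linarith [sub_eq_zero.mp h]
  rw [div_eq_iff hT1ne] at hq
  have hD : 0 < (T : ℝ) - u * ((T : ℝ) - 1) := by nlinarith
  rw [eq_div_iff (ne_of_gt hD)]
  linear_combination -hq
end

section
/- (Corollary 2, sufficiency, exact difference.) Assume constant momentum η_i ≡ 1 − η̄ with η̄ ∈ (0,1), T ≥ 2 tasks with batch boundaries 0 = m_0 < m_1 < ⋯ < m_T, and constant replay proportion r_i ≡ 1/T. Then for every 1 ≤ t ≤ T − 1: c_{t+1} − c_t = −(η̄^{m_T − m_t} − η̄^{m_T − m_{t−1}})/T. -/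
lemma key_geom (η' : ℝ) (N : ℕ) :
    ∀ b a : ℕ, a ≤ b → b ≤ N →
      ∑ i ∈ Finset.Icc (a + 1) b, (1 - η') * η' ^ (N - i)
        = η' ^ (N - b) - η' ^ (N - a) := by
  intro b
  induction b with
  | zero =>
    intro a ha hb
    interval_cases a
    simp
  | succ b ih =>
    intro a ha hb
    rcases Nat.eq_or_lt_of_le ha with h | h
    · subst h; simp
    · have hab : a ≤ b := Nat.lt_succ_iff.mp h
      rw [Finset.sum_Icc_succ_top (by omega : a + 1 ≤ b + 1),
        ih a hab (by omega)]
      have : N - b = (N - (b + 1)) + 1 := by omega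
      rw [this, pow_succ]
      ring

/-- **Corollary 2 (sufficiency, exact difference).**
Continual learning over `T ≥ 2` tasks with batch boundaries `0 = m 0 < m 1 < ⋯ < m T`,
statistical weight `c t` defined as usual. Assume constant momentum `η i ≡ 1 - η'`
with `η' ∈ (0,1)` and constant replay proportion `r i ≡ 1/T`. Then for every
`1 ≤ t ≤ T - 1`: `c (t+1) - c t = -(η'^(m T - m t) - η'^(m T - m (t-1))) / T`. -/
theorem corollary2_sufficiency_exact
    (T : ℕ) (hT : 2 ≤ T)
    (m : ℕ → ℕ) (hm0 : m 0 = 0) (hmono : ∀ t, t < T → m t < m (t + 1))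
    (η' : ℝ) (hη0 : 0 < η') (hη1 : η' < 1)
    (η : ℕ → ℝ) (hη : ∀ i, η i = 1 - η')
    (r : ℕ → ℝ) (hr : ∀ i, r i = 1 / (T : ℝ))
    (c : ℕ → ℝ)
    (hc : ∀ t, c t =
      (∑ i ∈ Finset.Icc (m (t - 1) + 1) (m t),
          η i * r i * ∏ j ∈ Finset.Icc (i + 1) (m T), (1 - η j)) +
        ∑ i ∈ Finset.Icc (m t + 1) (m T),
          (η i * (1 - r i) / ((T : ℝ) - 1)) * ∏ j ∈ Finset.Icc (i + 1) (m T), (1 - η j)) :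
    ∀ t, 1 ≤ t → t ≤ T - 1 →
      c (t + 1) - c t = -(η' ^ (m T - m t) - η' ^ (m T - m (t - 1))) / (T : ℝ) := by
  intro t ht1 ht2
  have hT0 : (T : ℝ) ≠ 0 := by positivity
  have hT1 : (T : ℝ) - 1 ≠ 0 := by
    have : (2 : ℝ) ≤ (T : ℝ) := by exact_mod_cast hT
    linarith
  -- monotonicity of m on [0, T]
  have hmle : ∀ b : ℕ, b ≤ T → ∀ a : ℕ, a ≤ b → m a ≤ m b := by
    intro b
    induction b with
    | zero => intro _ a ha; interval_cases a; omega
    | succ b ih =>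
      intro hbT a hab
      rcases Nat.eq_or_lt_of_le hab with h | h
      · subst h; exact le_rfl
      · exact le_trans (ih (by omega) a (by omega)) (le_of_lt (hmono b (by omega)))
  -- rewrite the products as powers
  have hprod : ∀ i : ℕ, (∏ j ∈ Finset.Icc (i + 1) (m T), (1 - η j)) = η' ^ (m T - i) := by
    intro i
    simp only [hη]
    rw [Finset.prod_const, Nat.card_Icc]
    have : m T + 1 - (i + 1) = m T - i := by omega
    rw [this]
    norm_num
  -- the two kinds of sums
  have hsum1 : ∀ a b : ℕ, a ≤ b → b ≤ m T →
      (∑ i ∈ Finset.Icc (a + 1) b, η i * r i * ∏ j ∈ Finset.Icc (i + 1) (m T), (1 - η j))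
        = (η' ^ (m T - b) - η' ^ (m T - a)) / T := by
    intro a b hab hbT
    have : (∑ i ∈ Finset.Icc (a + 1) b, η i * r i * ∏ j ∈ Finset.Icc (i + 1) (m T), (1 - η j))
        = (1 / T) * ∑ i ∈ Finset.Icc (a + 1) b, (1 - η') * η' ^ (m T - i) := by
      rw [Finset.mul_sum]
      refine Finset.sum_congr rfl ?_
      intro i _
      rw [hη, hr, hprod]
      ring
    rw [this, key_geom η' (m T) b a hab hbT]
    ring
  have hsum2 : ∀ a : ℕ, a ≤ m T →
      (∑ i ∈ Finset.Icc (a + 1) (m T),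
          (η i * (1 - r i) / ((T : ℝ) - 1)) * ∏ j ∈ Finset.Icc (i + 1) (m T), (1 - η j))
        = (1 - η' ^ (m T - a)) / T := by
    intro a haT
    have : (∑ i ∈ Finset.Icc (a + 1) (m T),
          (η i * (1 - r i) / ((T : ℝ) - 1)) * ∏ j ∈ Finset.Icc (i + 1) (m T), (1 - η j))
        = (1 / T) * ∑ i ∈ Finset.Icc (a + 1) (m T), (1 - η') * η' ^ (m T - i) := by
      rw [Finset.mul_sum]
      refine Finset.sum_congr rfl ?_
      intro i _
      rw [hη, hr, hprod]
      field_simp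
    rw [this, key_geom η' (m T) (m T) a haT le_rfl]
    simp
    ring
  -- bounds on the boundaries
  have h1 : m (t - 1) ≤ m t := hmle t (by omega) (t - 1) (by omega)
  have h2 : m t ≤ m (t + 1) := hmle (t + 1) (by omega) t (by omega)
  have h3 : m (t + 1) ≤ m T := hmle T le_rfl (t + 1) (by omega)
  have h4 : m t ≤ m T := le_trans h2 h3
  have hct : c t = (1 - η' ^ (m T - m (t - 1))) / T := by
    rw [hc t, hsum1 (m (t - 1)) (m t) h1 h4, hsum2 (m t) h4]
    ring
  have hct1 : c (t + 1) = (1 - η' ^ (m T - m t)) / T := by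
    rw [hc (t + 1)]
    simp only [Nat.add_sub_cancel]
    rw [hsum1 (m t) (m (t + 1)) h2 h3, hsum2 (m (t + 1)) h3]
    ring
  rw [hct, hct1]
  ring
end

section
/- (Corollary 2, sufficiency, bound.) Assume constant momentum η_i ≡ 1 − η̄ with η̄ ∈ (0,1), constant replay proportion r_i ≡ 1/T, T ≥ 2 tasks, and equal task lengths m_t = t·m_1 for a fixed integer m_1 ≥ 1. Then for every 1 ≤ t ≤ T − 1, the adjacent statistical weights differ by at most an exponentially small amount: | c_{t+1} − c_t | ≤ η̄^{m_1}/T. -/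
lemma geom_tail_bound (x : ℝ) (hx0 : 0 ≤ x) (a : ℕ) :
    ∀ b N : ℕ, b ≤ N →
      (1 - x) * ∑ i ∈ Finset.Icc a b, x ^ (N - i) ≤ x ^ (N - b) := by
  intro b
  induction b with
  | zero =>
      intro N hN
      rcases Nat.eq_zero_or_pos a with ha | ha
      · subst ha
        simp only [Finset.Icc_self, Finset.sum_singleton, Nat.sub_zero]
        nlinarith [pow_nonneg hx0 N, mul_nonneg hx0 (pow_nonneg hx0 N)]
      · rw [Finset.Icc_eq_empty (by omega)]
        simp [pow_nonneg hx0]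
  | succ b ih =>
      intro N hN
      by_cases hab : a ≤ b + 1
      · have hins : Finset.Icc a (b + 1) = insert (b + 1) (Finset.Icc a b) := by
          ext x
          simp only [Finset.mem_Icc, Finset.mem_insert]
          omega
        rw [hins, Finset.sum_insert (by simp)]
        have h1 := ih N (by omega)
        have h2 : x ^ (N - b) = x * x ^ (N - (b + 1)) := by
          rw [← pow_succ']
          congr 1
          omega
        nlinarith [pow_nonneg hx0 (N - (b + 1))]
      · rw [Finset.Icc_eq_empty hab]
        simp [pow_nonneg hx0]

/-- **Corollary 2 (sufficiency, bound).**
Continual learning over `T ≥ 2` tasks, statistical weight `c t` defined as usual.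
Assume constant momentum `η i ≡ 1 - η'` with `η' ∈ (0,1)`, constant replay proportion
`r i ≡ 1/T`, and equal task lengths `m t = t * m₁` with `m₁ ≥ 1`. Then for every
`1 ≤ t ≤ T - 1`, the adjacent statistical weights differ by at most an exponentially
small amount: `|c (t+1) - c t| ≤ η'^m₁ / T`. -/
theorem corollary2_sufficiency_bound
    (T : ℕ) (hT : 2 ≤ T)
    (m₁ : ℕ) (hm₁ : 1 ≤ m₁)
    (m : ℕ → ℕ) (hm : ∀ t, t ≤ T → m t = t * m₁)
    (η' : ℝ) (hη0 : 0 < η') (hη1 : η' < 1)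
    (η : ℕ → ℝ) (hη : ∀ i, η i = 1 - η')
    (r : ℕ → ℝ) (hr : ∀ i, r i = 1 / (T : ℝ))
    (c : ℕ → ℝ)
    (hc : ∀ t, c t =
      (∑ i ∈ Finset.Icc (m (t - 1) + 1) (m t),
          η i * r i * ∏ j ∈ Finset.Icc (i + 1) (m T), (1 - η j)) +
        ∑ i ∈ Finset.Icc (m t + 1) (m T),
          (η i * (1 - r i) / ((T : ℝ) - 1)) * ∏ j ∈ Finset.Icc (i + 1) (m T), (1 - η j)) :
    ∀ t, 1 ≤ t → t ≤ T - 1 → |c (t + 1) - c t| ≤ η' ^ m₁ / (T : ℝ) := by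
  intro t ht htT
  have hTR : (1 : ℝ) < (T : ℝ) := by exact_mod_cast (by omega : 1 < T)
  have hT0 : (0 : ℝ) < (T : ℝ) := by linarith
  set N := m T with hNdef
  set A : ℝ := (1 - η') / T with hAdef
  have hA0 : 0 ≤ A := by
    apply div_nonneg <;> linarith
  -- product simplification
  have hprod : ∀ i : ℕ, (∏ j ∈ Finset.Icc (i + 1) N, (1 - η j)) = η' ^ (N - i) := by
    intro i
    calc (∏ j ∈ Finset.Icc (i + 1) N, (1 - η j))
        = ∏ j ∈ Finset.Icc (i + 1) N, η' := by
          refine Finset.prod_congr rfl fun j _ => ?_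
          rw [hη]; ring
      _ = η' ^ (N - i) := by
          rw [Finset.prod_const, Nat.card_Icc]
          congr 1
          omega
  -- uniform coefficients
  have hA1 : ∀ i, η i * r i = A := by
    intro i; rw [hη, hr, hAdef]; ring
  have hA2 : ∀ i, η i * (1 - r i) / ((T : ℝ) - 1) = A := by
    intro i; rw [hη, hr, hAdef]
    have h1 : (T : ℝ) ≠ 0 := ne_of_gt hT0
    have h2 : (T : ℝ) - 1 ≠ 0 := by linarith
    field_simp
  -- closed form for c s
  have hcval : ∀ s : ℕ,
      c s = A * (∑ i ∈ Finset.Icc (m (s - 1) + 1) (m s), η' ^ (N - i)) +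
            A * (∑ i ∈ Finset.Icc (m s + 1) N, η' ^ (N - i)) := by
    intro s
    rw [hc s]
    rw [Finset.mul_sum, Finset.mul_sum]
    congr 1
    · refine Finset.sum_congr rfl fun i _ => ?_
      rw [hprod, hA1]
    · refine Finset.sum_congr rfl fun i _ => ?_
      rw [hprod, hA2]
  -- monotone task boundaries
  have hmt : m t = t * m₁ := hm t (by omega)
  have hmt1 : m (t + 1) = (t + 1) * m₁ := hm (t + 1) (by omega)
  have hmtm : m (t - 1) = (t - 1) * m₁ := hm (t - 1) (by omega)
  have hmT : N = T * m₁ := hm T le_rfl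
  have h1 : m t ≤ m (t + 1) := by
    rw [hmt, hmt1]
    exact Nat.mul_le_mul_right m₁ (by omega)
  have h2 : m (t + 1) ≤ N := by
    rw [hmt1, hmT]
    exact Nat.mul_le_mul_right m₁ (by omega)
  -- split the tail sum of c t at m (t+1)
  have hsplit :
      (∑ i ∈ Finset.Icc (m t + 1) (m (t + 1)), η' ^ (N - i)) +
      (∑ i ∈ Finset.Icc (m (t + 1) + 1) N, η' ^ (N - i)) =
      ∑ i ∈ Finset.Icc (m t + 1) N, η' ^ (N - i) := by
    rw [Finset.Icc_add_one_left_eq_Ioc, Finset.Icc_add_one_left_eq_Ioc, Finset.Icc_add_one_left_eq_Ioc]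
    exact Finset.sum_Ioc_consecutive _ h1 h2
  -- difference formula
  have hdiff : c (t + 1) - c t =
      -(A * ∑ i ∈ Finset.Icc (m (t - 1) + 1) (m t), η' ^ (N - i)) := by
    rw [hcval (t + 1), hcval t]
    have : t + 1 - 1 = t := by omega
    rw [this]
    have := hsplit
    nlinarith [hsplit]
  have hS0 : 0 ≤ ∑ i ∈ Finset.Icc (m (t - 1) + 1) (m t), η' ^ (N - i) :=
    Finset.sum_nonneg fun i _ => pow_nonneg hη0.le _
  rw [hdiff, abs_neg, abs_of_nonneg (mul_nonneg hA0 hS0)]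
  -- geometric bound
  have hmtN : m t ≤ N := le_trans h1 h2
  have hgb := geom_tail_bound η' hη0.le (m (t - 1) + 1) (m t) N hmtN
  have hexp : η' ^ (N - m t) ≤ η' ^ m₁ := by
    apply pow_le_pow_of_le_one hη0.le hη1.le
    rw [hmt, hmT]
    have : t + 1 ≤ T := by omega
    calc m₁ ≤ (T - t) * m₁ := Nat.le_mul_of_pos_left m₁ (by omega)
      _ = T * m₁ - t * m₁ := by rw [Nat.sub_mul]
  have : A * ∑ i ∈ Finset.Icc (m (t - 1) + 1) (m t), η' ^ (N - i) =
      ((1 - η') * ∑ i ∈ Finset.Icc (m (t - 1) + 1) (m t), η' ^ (N - i)) / T := by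
    rw [hAdef]; ring
  rw [this]
  gcongr
  exact le_trans hgb hexp
end

section
/- (Strict monotonicity of the modified momentum.) For every η̃ ∈ (0,1) and κ ∈ [0,1), the modified momentum sequence is strictly decreasing: η_{i+1} < η_i for every i ≥ 0. (In particular η̃^κ + (1 − η̃)^κ > 1 for κ ∈ [0,1) and η̃ ∈ (0,1).) -/
/-- **Strict monotonicity of the modified momentum.**
Given `ηt ∈ (0,1)` (denoted η̃ in the paper) and `κ ∈ [0,1)`, the modified momentum
sequence defined by `η 0 = ηt^κ` and `η i = η (i-1) / (η (i-1) + (1 - ηt)^κ)` for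
`i ≥ 1` is strictly decreasing: `η (i+1) < η i` for every `i ≥ 0`.
In particular `ηt^κ + (1 - ηt)^κ > 1`. -/
theorem modified_momentum_strict_mono
    (ηt κ : ℝ) (hηt0 : 0 < ηt) (hηt1 : ηt < 1) (hκ0 : 0 ≤ κ) (hκ1 : κ < 1)
    (η : ℕ → ℝ) (h0 : η 0 = ηt ^ κ)
    (hrec : ∀ i : ℕ, 1 ≤ i → η i = η (i - 1) / (η (i - 1) + (1 - ηt) ^ κ)) :
    (∀ i : ℕ, η (i + 1) < η i) ∧ 1 < ηt ^ κ + (1 - ηt) ^ κ := by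
  set c : ℝ := (1 - ηt) ^ κ with hc
  have h1t : (0:ℝ) < 1 - ηt := by linarith
  have hcpos : 0 < c := Real.rpow_pos_of_pos h1t κ
  have hη0pos : 0 < η 0 := h0 ▸ Real.rpow_pos_of_pos hηt0 κ
  -- ηt^κ > ηt and (1-ηt)^κ > 1-ηt
  have h1 : ηt < ηt ^ κ := by
    calc ηt = ηt ^ (1:ℝ) := (Real.rpow_one ηt).symm
    _ < ηt ^ κ := Real.rpow_lt_rpow_of_exponent_gt hηt0 hηt1 hκ1
  have h2 : 1 - ηt < c := by
    calc 1 - ηt = (1 - ηt) ^ (1:ℝ) := (Real.rpow_one _).symm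
    _ < c := Real.rpow_lt_rpow_of_exponent_gt h1t (by linarith) hκ1
  have hsum : 1 < ηt ^ κ + c := by linarith
  -- invariant
  have inv : ∀ i : ℕ, 0 < η i ∧ 1 - c < η i := by
    intro i
    induction i with
    | zero => exact ⟨hη0pos, by rw [h0]; linarith⟩
    | succ n ih =>
      obtain ⟨hpos, hgt⟩ := ih
      have hden : (0:ℝ) < η n + c := by linarith
      have hrw : η (n + 1) = η n / (η n + c) := by
        have := hrec (n + 1) (Nat.le_add_left 1 n)
        simpa using this
      constructor
      · rw [hrw]; positivity
      · rw [hrw]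
        rw [lt_div_iff₀ hden]
        nlinarith
  refine ⟨fun i => ?_, hsum⟩
  obtain ⟨hpos, hgt⟩ := inv i
  have hden : (0:ℝ) < η i + c := by linarith
  have hrw : η (i + 1) = η i / (η i + c) := by
    have := hrec (i + 1) (Nat.le_add_left 1 i)
    simpa using this
  rw [hrw, div_lt_iff₀ hden]
  nlinarith
end

section
/- (BN reduces the Lipschitz constant of the loss.) With â, g, γ, σ, C and h as in the context, the BN gradient is no larger than the non-BN gradient up to the factor |γ|/σ: ‖h‖ ≤ (|γ|/σ)·‖g‖. -/
open scoped InnerProductSpace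

/-! The BN gradient is, up to the factor `γ / σ`, the component of `g` orthogonal to the
two orthogonal vectors `1` and `â` (both of squared norm `C`): subtracting the projections
of `g` onto two orthogonal lines leaves a vector orthogonal to what was removed, so by
Pythagoras it is no longer than `g`. -/

section OrthogonalComponent

variable {E : Type*} [NormedAddCommGroup E] [InnerProductSpace ℝ E]

theorem norm_le_norm_add_of_inner_eq_zero {v p : E} (h : ⟪v, p⟫_ℝ = 0) : ‖v‖ ≤ ‖v + p‖ := by
  refine (mul_self_le_mul_self_iff (norm_nonneg _) (norm_nonneg _)).2 ?_
  rw [norm_add_sq_eq_norm_sq_add_norm_sq_real h]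
  exact le_add_of_nonneg_right (mul_self_nonneg _)

theorem inner_sub_projection_sub_projection_left {u w : E} (huw : ⟪u, w⟫_ℝ = 0) (g : E) :
    ⟪u, g - (⟪u, g⟫_ℝ / ‖u‖ ^ 2) • u - (⟪w, g⟫_ℝ / ‖w‖ ^ 2) • w⟫_ℝ = 0 := by
  rcases eq_or_ne u 0 with rfl | hu
  · simp
  have hu2 : ‖u‖ ^ 2 ≠ 0 := by positivity
  rw [inner_sub_right, inner_sub_right, real_inner_smul_right, real_inner_smul_right, huw,
    real_inner_self_eq_norm_sq, div_mul_cancel₀ _ hu2]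
  ring

theorem norm_sub_projection_sub_projection_le {u w : E} (huw : ⟪u, w⟫_ℝ = 0) (g : E) :
    ‖g - (⟪u, g⟫_ℝ / ‖u‖ ^ 2) • u - (⟪w, g⟫_ℝ / ‖w‖ ^ 2) • w‖ ≤ ‖g‖ := by
  set a := ⟪u, g⟫_ℝ / ‖u‖ ^ 2
  set b := ⟪w, g⟫_ℝ / ‖w‖ ^ 2
  set v := g - a • u - b • w
  have hvu : ⟪u, v⟫_ℝ = 0 := inner_sub_projection_sub_projection_left huw g
  have hvw : ⟪w, v⟫_ℝ = 0 := by
    have := inner_sub_projection_sub_projection_left (real_inner_comm u w ▸ huw) g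
    rwa [sub_right_comm] at this
  have hv : ⟪v, a • u + b • w⟫_ℝ = 0 := by
    rw [inner_add_right, real_inner_smul_right, real_inner_smul_right, real_inner_comm,
      hvu, real_inner_comm, hvw]
    ring
  calc ‖v‖ ≤ ‖v + (a • u + b • w)‖ := norm_le_norm_add_of_inner_eq_zero hv
    _ = ‖g‖ := by congr 1; simp only [v]; abel

end OrthogonalComponent

theorem EuclideanSpace.norm_sq_const_one (C : ℕ) :
    ‖WithLp.toLp 2 (fun _ : Fin C => (1 : ℝ))‖ ^ 2 = C := by
  simp [EuclideanSpace.norm_eq]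

theorem bn_reduces_lipschitz_general (C : ℕ)
    (ones ahat g h : EuclideanSpace ℝ (Fin C))
    (hones : ones = WithLp.toLp 2 (fun _ => (1 : ℝ)))
    (γ σ : ℝ) (hσ : 0 < σ)
    (hmean : ⟪ones, ahat⟫_ℝ = 0)
    (hvar : ‖ahat‖ ^ 2 = (C : ℝ))
    (hh : h = (γ / σ) •
      (g - (⟪ones, g⟫_ℝ / (C : ℝ)) • ones - (⟪g, ahat⟫_ℝ / (C : ℝ)) • ahat)) :
    ‖h‖ ≤ |γ| / σ * ‖g‖ := by
  have hones_sq : ‖ones‖ ^ 2 = C := hones ▸ EuclideanSpace.norm_sq_const_one C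
  have hproj := norm_sub_projection_sub_projection_le hmean g
  rw [hones_sq, hvar, real_inner_comm g ahat] at hproj
  rw [hh, norm_smul, Real.norm_eq_abs, abs_div, abs_of_pos hσ]
  exact mul_le_mul_of_nonneg_left hproj (by positivity)

/-- **BN reduces the Lipschitz constant of the loss.**
Work in `ℝ^C` (`C ≥ 1`) with the all-ones vector `ones`. Let `ahat` (denoted `â` in the
paper) be a batch-normalized representation (`⟪ones, ahat⟫ = 0`, `‖ahat‖² = C`), `g` the
gradient of the loss of the non-BN model, `γ` the BN affine scale and `σ > 0` the batch
standard deviation. The gradient of the BN model w.r.t. the pre-normalization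
representation is `h = (γ/σ) • (g - (⟪ones, g⟫/C) • ones - (⟪g, ahat⟫/C) • ahat)`,
and it is no larger than the non-BN gradient up to the factor `|γ|/σ`:
`‖h‖ ≤ (|γ|/σ) · ‖g‖`. -/
theorem bn_reduces_lipschitz (C : ℕ) (hC : 1 ≤ C)
    (ones ahat g h : EuclideanSpace ℝ (Fin C))
    (hones : ones = WithLp.toLp 2 (fun _ => (1 : ℝ)))
    (γ σ : ℝ) (hσ : 0 < σ)
    (hmean : ⟪ones, ahat⟫_ℝ = 0)
    (hvar : ‖ahat‖ ^ 2 = (C : ℝ))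
    (hh : h = (γ / σ) •
      (g - (⟪ones, g⟫_ℝ / (C : ℝ)) • ones - (⟪g, ahat⟫_ℝ / (C : ℝ)) • ahat)) :
    ‖h‖ ≤ |γ| / σ * ‖g‖ :=
  bn_reduces_lipschitz_general C ones ahat g h hones γ σ hσ hmean hvar hh
end
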